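/- For r = 2 the operators satisfy: the formal series a(z) = 1 − (5/24)z^{-3} + … ∈ 1 + z^{-3}ℚ[[z^{-3}]] solving S_z^2 a = z^2 a, together with its rotation a(ωz) (ω = e^{iπ/3}), satisfies the bilinear concomitant identity S_z^⋆(a(ωz))·a(z) + a(ωz)·S_z a(z) = −2z in the ring of formal Laurent series. -/

import Mathlib

/-! Write `ϑ = t d/dt` in the variable `t = z⁻¹`. Then `S_z = t²(-1/2 - ϑ) - t⁻¹` and
`S_z^⋆ = t²(1/2 + ϑ) - t⁻¹`, so the concomitant equals `t⁻¹ (t³ W - 2 a(z) a(ωz))` for the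
Wronskian `W = a(z) ϑ a(ωz) - a(ωz) ϑ a(z)`. The equation `S_z² a = z² a` reads
`t³ (ϑ² + 3ϑ + 5/4) a = -2 ϑ a`, and since `ω³ = -1` the series `a(ωz)` solves the same equation
with `-2` replaced by `2`. For such a pair `ϑ (t³ W) = 2 ϑ (a(z) a(ωz))`, so `t³ W - 2 a(z) a(ωz)`
is a constant, which is `-2` by comparing constant terms. -/

open HahnSeries Pointwise

/-- The operator `S_z = z^{1-r} ∂_z - (r-1)/(2 z^r) - z` acting on formal Laurent
series with finitely many positive powers of `z`, written in the variable
`t = z⁻¹` (so `coeff m` is the coefficient of `z^{-m}`). -/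
noncomputable def Sop (r : ℕ) (f : LaurentSeries ℂ) : LaurentSeries ℂ where
  coeff m := ((r + 1 : ℂ) / 2 - m) * f.coeff (m - r) - f.coeff (m + 1)
  isPWO_support' := by
    have h : (Function.support fun m : ℤ =>
        ((r + 1 : ℂ) / 2 - m) * f.coeff (m - r) - f.coeff (m + 1))
        ⊆ (f.support + {(r : ℤ)}) ∪ (f.support + ({(-1 : ℤ)} : Set ℤ)) := by
      intro m hm
      simp only [Function.mem_support] at hm
      by_cases h1 : f.coeff (m - (r : ℤ)) = 0
      · have h2 : f.coeff (m + 1) ≠ 0 := fun h2 => hm (by rw [h1, h2]; ring)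
        right
        exact Set.mem_add.mpr ⟨m + 1, by simpa using h2, -1, rfl, by ring⟩
      · left
        exact Set.mem_add.mpr ⟨m - r, by simpa using h1, r, rfl, by ring⟩
    exact ((f.isPWO_support.add (Set.isPWO_singleton (r : ℤ))).union
      (f.isPWO_support.add (Set.isPWO_singleton (-1 : ℤ)))).mono h

/-- The formal adjoint `S_z^⋆ = -z^{1-r} ∂_z + (r-1)/(2 z^r) - z`. -/
noncomputable def Sstar (r : ℕ) (f : LaurentSeries ℂ) : LaurentSeries ℂ where
  coeff m := ((m : ℂ) - (r + 1) / 2) * f.coeff (m - r) - f.coeff (m + 1)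
  isPWO_support' := by
    have h : (Function.support fun m : ℤ =>
        ((m : ℂ) - (r + 1) / 2) * f.coeff (m - r) - f.coeff (m + 1))
        ⊆ (f.support + {(r : ℤ)}) ∪ (f.support + ({(-1 : ℤ)} : Set ℤ)) := by
      intro m hm
      simp only [Function.mem_support] at hm
      by_cases h1 : f.coeff (m - (r : ℤ)) = 0
      · have h2 : f.coeff (m + 1) ≠ 0 := fun h2 => hm (by rw [h1, h2]; ring)
        right
        exact Set.mem_add.mpr ⟨m + 1, by simpa using h2, -1, rfl, by ring⟩
      · left
        exact Set.mem_add.mpr ⟨m - r, by simpa using h1, r, rfl, by ring⟩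
    exact ((f.isPWO_support.add (Set.isPWO_singleton (r : ℤ))).union
      (f.isPWO_support.add (Set.isPWO_singleton (-1 : ℤ)))).mono h

/-- Substitution `z ↦ ω z` on a formal Laurent series (`coeff m` is the
coefficient of `z^{-m}`, which gets multiplied by `ω^{-m}`). -/
noncomputable def rot (ω : ℂ) (f : LaurentSeries ℂ) : LaurentSeries ℂ where
  coeff m := ω ^ (-m) * f.coeff m
  isPWO_support' := f.isPWO_support.mono (fun m hm => by
    simp only [Function.mem_support] at hm ⊢
    exact fun h => hm (by rw [h, mul_zero]))

namespace LaurentSeries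

variable {R : Type*} [CommRing R]

section OrderTop

theorem order_eq_zero_of_orderTop_eq_zero {f : LaurentSeries R} (hf : f.orderTop = 0) :
    f.order = 0 := by
  have hne : f ≠ 0 := by rintro rfl; simp at hf
  exact_mod_cast (order_eq_orderTop_of_ne_zero hne).trans hf

theorem coeff_zero_mul_of_orderTop_nonneg {f g : LaurentSeries R} (hf : 0 ≤ f.orderTop)
    (hg : 0 ≤ g.orderTop) : (f * g).coeff 0 = f.coeff 0 * g.coeff 0 := by
  have hfg : f.orderTop + g.orderTop ≤ (f * g).orderTop := orderTop_add_le_mul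
  rcases hf.lt_or_eq with hf | hf
  · rw [coeff_eq_zero_of_lt_orderTop hf, coeff_eq_zero_of_lt_orderTop, zero_mul]
    exact (hf.trans_le (le_add_of_nonneg_right hg)).trans_le hfg
  rcases hg.lt_or_eq with hg | hg
  · rw [coeff_eq_zero_of_lt_orderTop hg, coeff_eq_zero_of_lt_orderTop, mul_zero]
    exact (hg.trans_le (le_add_of_nonneg_left hf.le)).trans_le hfg
  have h := coeff_mul_order_add_order f g
  rwa [leadingCoeff_eq, leadingCoeff_eq, order_eq_zero_of_orderTop_eq_zero hf.symm,
    order_eq_zero_of_orderTop_eq_zero hg.symm, add_zero] at h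

theorem orderTop_mul_nonneg {f g : LaurentSeries R} (hf : 0 ≤ f.orderTop)
    (hg : 0 ≤ g.orderTop) : 0 ≤ (f * g).orderTop :=
  (add_nonneg hf hg).trans orderTop_add_le_mul

end OrderTop

section EulerOperator

/-- The Euler operator `ϑ = t d/dt`; in terms of `z = t⁻¹` it is `-z d/dz`. -/
noncomputable def eulerOp : LaurentSeries R →+ LaurentSeries R where
  toFun f :=
    { coeff := fun m => (m : R) * f.coeff m
      isPWO_support' := f.isPWO_support.mono fun m hm => by
        simp only [Function.mem_support] at hm ⊢
        exact right_ne_zero_of_mul hm }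
  map_zero' := by ext; simp
  map_add' f g := by ext; simp [mul_add]

scoped notation "ϑ" => eulerOp

@[simp]
theorem eulerOp_coeff (f : LaurentSeries R) (m : ℤ) : (ϑ f).coeff m = (m : R) * f.coeff m :=
  rfl

theorem support_eulerOp_subset (f : LaurentSeries R) : (ϑ f).support ⊆ f.support :=
  fun _ hm => right_ne_zero_of_mul hm

theorem orderTop_le_orderTop_eulerOp (f : LaurentSeries R) : f.orderTop ≤ (ϑ f).orderTop :=
  le_orderTop_iff_forall.mpr fun _ hj => by
    rw [eulerOp_coeff, coeff_eq_zero_of_lt_orderTop hj, mul_zero]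

theorem eulerOp_mul (f g : LaurentSeries R) : ϑ (f * g) = ϑ f * g + f * ϑ g := by
  ext n
  rw [coeff_add, eulerOp_coeff, coeff_mul,
    coeff_mul_left' f.isPWO_support (support_eulerOp_subset f),
    coeff_mul_right' g.isPWO_support (support_eulerOp_subset g),
    Finset.mul_sum, ← Finset.sum_add_distrib]
  refine Finset.sum_congr rfl fun ij hij => ?_
  obtain ⟨-, -, hn⟩ := Finset.mem_antidiagonal.mp hij
  rw [eulerOp_coeff, eulerOp_coeff, ← hn, Int.cast_add]
  ring

theorem eulerOp_single (k : ℤ) (c : R) : ϑ (single k c) = C (k : R) * single k c := by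
  ext m
  rw [eulerOp_coeff, C_mul_eq_smul, coeff_smul, smul_eq_mul]
  rcases eq_or_ne m k with rfl | hm
  · rfl
  · rw [coeff_single_of_ne hm, mul_zero, mul_zero]

theorem eulerOp_C (c : R) : ϑ (C c) = 0 := by
  rw [C_apply, eulerOp_single, Int.cast_zero, map_zero, zero_mul]

theorem eq_C_of_eulerOp_eq_zero [CharZero R] [NoZeroDivisors R] {f : LaurentSeries R}
    (hf : ϑ f = 0) : f = C (f.coeff 0) := by
  ext m
  rcases eq_or_ne m 0 with rfl | hm
  · simp
  · have := congrArg (coeff · m) hf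
    simp only [eulerOp_coeff, coeff_zero, mul_eq_zero, Int.cast_eq_zero, hm, false_or] at this
    rw [this, C_apply, coeff_single_of_ne hm]

end EulerOperator

section EulerEquation

variable {K : Type*} [Field K]

/-- `t³ (ϑ² + 3ϑ + 5/4) f = c ϑ f`; for `c = -2` this is `S_z² f = z² f`. -/
def EulerODE (c : K) (f : LaurentSeries K) : Prop :=
  single 3 1 * (ϑ (ϑ f) + C 3 * ϑ f + C (5 / 4) * f) = C c * ϑ f

noncomputable def wronskian (f g : LaurentSeries K) : LaurentSeries K :=
  f * ϑ g - g * ϑ f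

theorem orderTop_wronskian_nonneg {f g : LaurentSeries K} (hf : 0 ≤ f.orderTop)
    (hg : 0 ≤ g.orderTop) : 0 ≤ (wronskian f g).orderTop :=
  (le_min (orderTop_mul_nonneg hf (hg.trans (orderTop_le_orderTop_eulerOp g)))
    (orderTop_mul_nonneg hg (hf.trans (orderTop_le_orderTop_eulerOp f)))).trans
    min_orderTop_le_orderTop_sub

theorem eulerOp_single_mul_wronskian {c : K} {f g : LaurentSeries K} (hf : EulerODE (-c) f)
    (hg : EulerODE c g) : ϑ (single 3 1 * wronskian f g) = C c * ϑ (f * g) := by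
  have h3 : ϑ (single 3 (1 : K)) = C 3 * single 3 1 := by
    rw [eulerOp_single, Int.cast_ofNat]
  rw [EulerODE, map_neg] at hf
  rw [EulerODE] at hg
  rw [wronskian, eulerOp_mul, h3, map_sub, eulerOp_mul, eulerOp_mul, eulerOp_mul]
  linear_combination f * hg - g * hf

theorem single_mul_wronskian_sub [CharZero K] {c : K} {f g : LaurentSeries K}
    (hf : EulerODE (-c) f) (hg : EulerODE c g) (hf0 : 0 ≤ f.orderTop) (hg0 : 0 ≤ g.orderTop) :
    single 3 1 * wronskian f g - C c * (f * g) = C (-(c * f.coeff 0 * g.coeff 0)) := by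
  set V := single 3 1 * wronskian f g - C c * (f * g)
  have hV : ϑ V = 0 := by
    rw [map_sub, eulerOp_single_mul_wronskian hf hg, eulerOp_mul (C c), eulerOp_C,
      zero_mul, zero_add, sub_self]
  rw [eq_C_of_eulerOp_eq_zero hV]
  congr 1
  rw [coeff_sub, coeff_single_mul, C_mul_eq_smul, coeff_smul,
    coeff_eq_zero_of_lt_orderTop ((orderTop_wronskian_nonneg hf0 hg0).trans_lt' _),
    coeff_zero_mul_of_orderTop_nonneg hf0 hg0]
  · simp only [mul_zero, smul_eq_mul, zero_sub, neg_inj]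
    ring
  · exact WithTop.coe_lt_coe.mpr (by norm_num)

end EulerEquation

end LaurentSeries

open LaurentSeries

theorem Sop_coeff (r : ℕ) (f : LaurentSeries ℂ) (m : ℤ) :
    (Sop r f).coeff m = ((r + 1 : ℂ) / 2 - m) * f.coeff (m - r) - f.coeff (m + 1) :=
  rfl

theorem Sstar_coeff (r : ℕ) (f : LaurentSeries ℂ) (m : ℤ) :
    (Sstar r f).coeff m = ((m : ℂ) - (r + 1) / 2) * f.coeff (m - r) - f.coeff (m + 1) :=
  rfl

theorem rot_coeff (ω : ℂ) (f : LaurentSeries ℂ) (m : ℤ) :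
    (rot ω f).coeff m = ω ^ (-m) * f.coeff m :=
  rfl

theorem orderTop_le_orderTop_rot (ω : ℂ) (f : LaurentSeries ℂ) :
    f.orderTop ≤ (rot ω f).orderTop :=
  le_orderTop_iff_forall.mpr fun _ hj => by
    rw [rot_coeff, coeff_eq_zero_of_lt_orderTop hj, mul_zero]

theorem LaurentSeries.EulerODE.rot {ω : ℂ} (hω : ω ^ 3 = -1) {c : ℂ} {f : LaurentSeries ℂ}
    (hf : EulerODE c f) : EulerODE (-c) (rot ω f) := by
  have hω0 : ω ≠ 0 := by rintro rfl; norm_num at hω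
  ext m
  have h := congrArg (coeff · m) hf
  simp only [coeff_single_mul, coeff_add, C_mul_eq_smul, coeff_smul, eulerOp_coeff, rot_coeff,
    smul_eq_mul] at h ⊢
  have hshift : ω ^ (-(m - 3)) = -ω ^ (-m) := by
    rw [show -(m - 3) = -m + (3 : ℕ) by push_cast; ring, zpow_add₀ hω0, zpow_natCast, hω,
      mul_neg_one]
  rw [hshift]
  linear_combination (-ω ^ (-m)) * h

theorem eulerODE_of_Sop_two_sq {f : LaurentSeries ℂ} (h : Sop 2 (Sop 2 f) = single (-2) 1 * f) :
    EulerODE (-2) f := by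
  ext m
  have h := congrArg (coeff · (m + 1)) h
  simp only [Sop_coeff, coeff_single_mul] at h
  simp only [coeff_single_mul, coeff_add, C_mul_eq_smul, coeff_smul, eulerOp_coeff, smul_eq_mul]
  push_cast at h ⊢
  ring_nf at h ⊢
  linear_combination h

theorem Sop_two_eq (f : LaurentSeries ℂ) :
    Sop 2 f = single 2 1 * (-C (1 / 2) * f - ϑ f) - single (-1) 1 * f := by
  ext m
  simp only [Sop_coeff, coeff_sub, coeff_single_mul, neg_mul, C_mul_eq_smul, coeff_smul, coeff_neg,
    eulerOp_coeff, smul_eq_mul]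
  push_cast
  ring_nf

theorem Sstar_two_eq (f : LaurentSeries ℂ) :
    Sstar 2 f = single 2 1 * (C (1 / 2) * f + ϑ f) - single (-1) 1 * f := by
  ext m
  simp only [Sstar_coeff, coeff_sub, coeff_add, coeff_single_mul, C_mul_eq_smul, coeff_smul,
    eulerOp_coeff, smul_eq_mul]
  push_cast
  ring_nf

theorem Sstar_two_mul_add_mul_Sop_two (f g : LaurentSeries ℂ) :
    Sstar 2 g * f + g * Sop 2 f =
      single (-1) 1 * (single 3 1 * wronskian f g - C 2 * (f * g)) := by
  have h : (single (-1) 1 * single 3 1 : LaurentSeries ℂ) = single 2 1 := by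
    rw [single_mul_single]; norm_num
  rw [Sop_two_eq, Sstar_two_eq, wronskian]
  linear_combination (g * ϑ f - f * ϑ g) * h +
    g * single (-1) 1 * f * map_ofNat (C : ℂ →+* LaurentSeries ℂ) 2

/-- Bilinear concomitant identity for `r = 2`: with `ω = exp(iπ/3)` and `a` the
formal solution in `1 + z^{-3}ℚ[[z^{-3}]]` of `S_z^2 a = z^2 a`,
`S_z^⋆(a(ωz))·a(z) + a(ωz)·S_z a(z) = -2z`  (`z = single (-1) 1` in `t = z⁻¹`). -/
theorem concomitant_r_two (a : LaurentSeries ℂ)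
    (ha0 : a.coeff 0 = 1)
    (hsupp : ∀ m : ℤ, a.coeff m ≠ 0 → ∃ k : ℕ, m = 3 * k)
    (hode : (Sop 2)^[2] a = HahnSeries.single (-2 : ℤ) 1 * a) :
    let ω : ℂ := Complex.exp (Real.pi * Complex.I / 3)
    Sstar 2 (rot ω a) * a + rot ω a * Sop 2 a
      = (-2 : ℂ) • HahnSeries.single (-1 : ℤ) (1 : ℂ) := by
  intro ω
  have hω : ω ^ 3 = -1 := by
    rw [← Complex.exp_nat_mul, ← Complex.exp_pi_mul_I]
    push_cast
    ring_nf
  have ha : EulerODE (-2) a := eulerODE_of_Sop_two_sq hode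
  have hb : EulerODE 2 (rot ω a) := neg_neg (2 : ℂ) ▸ ha.rot hω
  have ha_nonneg : 0 ≤ a.orderTop := le_orderTop_iff_forall.mpr fun m hm => by
    by_contra h
    obtain ⟨k, rfl⟩ := hsupp m h
    exact absurd (WithTop.coe_lt_coe.mp hm) (by omega)
  have hb_nonneg := ha_nonneg.trans (orderTop_le_orderTop_rot ω a)
  rw [Sstar_two_mul_add_mul_Sop_two, single_mul_wronskian_sub ha hb ha_nonneg hb_nonneg, rot_coeff,
    ha0, mul_comm, C_mul_eq_smul]
  congr 1
  simp
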